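/- arXiv:2201.10496 — 5 statements merged into one kernel-verified Lean document; each statement's English description precedes it below -/
import Mathlib

section
/- Let N ≥ 3 be an integer, 1 < p < N, a0 ∈ (p−N, p], 0 ≤ β0 ≤ 1, α0 ∈ ℝ, and let γ0 satisfy p − a0 < γ0 < N. Let q1 ∈ ℝ. Then there exists ξ ≥ 0 such that 1/p ≤ β0 + ξ ≤ 1 and p(β0 + ξ) < q1 < [p²(α0 + ξγ0) + p²N − p(β0 + ξ)((p−1)γ0 + p − a0)]/(p(N−1) − (p−1)γ0 + a0) if and only if max{1, pβ0} < q1 < min{q_*(α0, β0, γ0), q_**(a0, α0, β0, γ0)}. -/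
open MeasureTheory Filter Topology Metric Set
open scoped ENNReal NNReal

noncomputable section

abbrev Euc (N : ℕ) := EuclideanSpace ℝ (Fin N)

/-- A function is radial if it depends only on the norm of its argument. -/
def IsRadial {N : ℕ} (u : Euc N → ℝ) : Prop :=
  ∀ x y : Euc N, ‖x‖ = ‖y‖ → u x = u y

/-- Smooth compactly supported radial functions with finite weighted Dirichlet energy. -/
def IsTestA (N : ℕ) (A : ℝ → ℝ) (p : ℝ) (u : Euc N → ℝ) : Prop :=
  ContDiff ℝ (⊤ : ℕ∞) u ∧ HasCompactSupport u ∧ IsRadial u ∧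
    Integrable (fun x : Euc N => A ‖x‖ * ‖fderiv ℝ u x‖ ^ p)

/-- The weighted Dirichlet norm `‖u‖_A = (∫ A(|x|) |∇u|^p dx)^{1/p}`. -/
def normA (N : ℕ) (A : ℝ → ℝ) (p : ℝ) (u : Euc N → ℝ) : ℝ :=
  (∫ x : Euc N, A ‖x‖ * ‖fderiv ℝ u x‖ ^ p) ^ (1 / p)

/-- Membership of `u` in `D_A` (realized as a function), with `‖u‖_A = nu`:
there is an approximating sequence of test functions, Cauchy in the `A`-norm,
converging a.e. to `u`, whose `A`-norms converge to `nu`. -/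
def MemDA (N : ℕ) (A : ℝ → ℝ) (p : ℝ) (u : Euc N → ℝ) (nu : ℝ) : Prop :=
  ∃ v : ℕ → Euc N → ℝ,
    (∀ n, IsTestA N A p (v n)) ∧
    (∀ ε : ℝ, 0 < ε → ∃ n0 : ℕ, ∀ m ≥ n0, ∀ n ≥ n0,
        normA N A p (fun x => v m x - v n x) < ε) ∧
    Tendsto (fun n => normA N A p (v n)) atTop (nhds nu) ∧
    (∀ᵐ x : Euc N, Tendsto (fun n => v n x) atTop (nhds (u x)))

/-- Membership of `u` in `X = D_A ∩ L^p(ℝ^N, V(|x|)dx)`, with `‖u‖_X = nu`. -/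
def MemX (N : ℕ) (A V : ℝ → ℝ) (p : ℝ) (u : Euc N → ℝ) (nu : ℝ) : Prop :=
  ∃ na : ℝ, MemDA N A p u na ∧
    Integrable (fun x : Euc N => V ‖x‖ * |u x| ^ p) ∧
    nu = (na ^ p + ∫ x : Euc N, V ‖x‖ * |u x| ^ p) ^ (1 / p)

/-- `S_0(q,R) = sup { ∫_{B_R} K(|x|) |u|^q dx : u ∈ X, ‖u‖ = 1 }`. -/
def S0 (N : ℕ) (A V K : ℝ → ℝ) (p q R : ℝ) : ℝ≥0∞ :=
  ⨆ (u : Euc N → ℝ) (_ : MemX N A V p u 1),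
    ∫⁻ x in ball (0 : Euc N) R, ENNReal.ofReal (K ‖x‖ * |u x| ^ q)

/-- `S_∞(q,R) = sup { ∫_{ℝ^N ∖ B_R} K(|x|) |u|^q dx : u ∈ X, ‖u‖ = 1 }`. -/
def Sinf (N : ℕ) (A V K : ℝ → ℝ) (p q R : ℝ) : ℝ≥0∞ :=
  ⨆ (u : Euc N → ℝ) (_ : MemX N A V p u 1),
    ∫⁻ x in (ball (0 : Euc N) R)ᶜ, ENNReal.ofReal (K ‖x‖ * |u x| ^ q)

/-- The measure `K(|x|) dx`. -/
def muK (N : ℕ) (K : ℝ → ℝ) : Measure (Euc N) :=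
  volume.withDensity fun x => ENNReal.ofReal (K ‖x‖)

/-- The norm of the sum space `L^{q1}_K + L^{q2}_K`:
`inf { max(‖u1‖_{L^{q1}_K}, ‖u2‖_{L^{q2}_K}) : w = u1 + u2 }` (`+∞` if no decomposition). -/
def sumNorm (N : ℕ) (K : ℝ → ℝ) (q1 q2 : ℝ) (w : Euc N → ℝ) : ℝ≥0∞ :=
  ⨅ (u1 : Euc N → ℝ) (u2 : Euc N → ℝ) (_ : w = u1 + u2)
    (_ : MemLp u1 (ENNReal.ofReal q1) (muK N K))
    (_ : MemLp u2 (ENNReal.ofReal q2) (muK N K)),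
    max (eLpNorm u1 (ENNReal.ofReal q1) (muK N K))
      (eLpNorm u2 (ENNReal.ofReal q2) (muK N K))

/-- Assumption (A): `A` is continuous and positive on `(0,∞)` and behaves like `r^{a0}`
near `0` and like `r^{a∞}` near `∞`, with `a0, a∞ ∈ (p−N, p]`. -/
structure HypA (N : ℕ) (p : ℝ) (A : ℝ → ℝ) (a0 aI : ℝ) : Prop where
  cont : ContinuousOn A (Ioi 0)
  pos : ∀ r > (0 : ℝ), 0 < A r
  ha0 : p - N < a0 ∧ a0 ≤ p
  haI : p - N < aI ∧ aI ≤ p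
  lb0 : ∃ c0 > (0 : ℝ), c0 ≤ Filter.liminf (fun r => A r / r ^ a0) (nhdsWithin 0 (Ioi 0))
  ub0 : Filter.IsBoundedUnder (· ≤ ·) (nhdsWithin 0 (Ioi 0)) fun r => A r / r ^ a0
  lbI : ∃ cI > (0 : ℝ), cI ≤ Filter.liminf (fun r => A r / r ^ aI) Filter.atTop
  ubI : Filter.IsBoundedUnder (· ≤ ·) Filter.atTop fun r => A r / r ^ aI

/-- Assumption (V): `V : (0,∞) → [0,∞)` measurable, locally integrable on `(0,∞)`. -/
structure HypV (V : ℝ → ℝ) : Prop where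
  meas : Measurable V
  nonneg : ∀ r, 0 ≤ V r
  locint : ∀ r R : ℝ, 0 < r → r < R → IntegrableOn V (Icc r R)

/-- Assumption (K): `K : (0,∞) → (0,∞)` measurable, in `L^s_loc((0,∞))` for some `s > 1`. -/
structure HypK (K : ℝ → ℝ) : Prop where
  meas : Measurable K
  pos : ∀ r > (0 : ℝ), 0 < K r
  locint : ∃ s > (1 : ℝ), ∀ r R : ℝ, 0 < r → r < R →
    IntegrableOn (fun t => K t ^ s) (Icc r R)

/-- `q_*(α,β,γ) = p (α − γβ + N)/(N − γ)`. -/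
def qStar (N p α β γ : ℝ) : ℝ := p * (α - γ * β + N) / (N - γ)

/-- `q_{**}(a,α,β,γ) = p (pα + (1−pβ)γ + p(N−1) + a)/(p(N−1) − γ(p−1) + a)`. -/
def qStarStar (N p a α β γ : ℝ) : ℝ :=
  p * (p * α + (1 - p * β) * γ + p * (N - 1) + a) / (p * (N - 1) - γ * (p - 1) + a)

/-- The region `𝒜_{a,β,γ}` of the `(α,q)`-plane. -/
def regionA (N p a β γ : ℝ) : Set (ℝ × ℝ) :=
  if γ < N then
    {z | max 1 (p * β) < z.2 ∧ z.2 < min (qStar N p z.1 β γ) (qStarStar N p a z.1 β γ)}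
  else if γ = N then
    {z | max 1 (p * β) < z.2 ∧ z.2 < qStarStar N p a z.1 β γ ∧ -(1 - β) * N < z.1}
  else if γ < (p * (N - 1) + a) / (p - 1) then
    {z | max (max 1 (p * β)) (qStar N p z.1 β γ) < z.2 ∧ z.2 < qStarStar N p a z.1 β γ}
  else if γ = (p * (N - 1) + a) / (p - 1) then
    {z | max (max 1 (p * β)) (qStar N p z.1 β γ) < z.2 ∧ -(1 - β) * γ < z.1}
  else
    {z | max (max (max 1 (p * β)) (qStar N p z.1 β γ)) (qStarStar N p a z.1 β γ) < z.2}

/-- `g` is the weak gradient of `u` on `ℝ^N ∖ {0}`. -/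
def IsWeakGrad (N : ℕ) (u : Euc N → ℝ) (g : Euc N → Euc N) : Prop :=
  ∀ φ : Euc N → ℝ, ContDiff ℝ (⊤ : ℕ∞) φ → HasCompactSupport φ →
    tsupport φ ⊆ {x : Euc N | x ≠ 0} →
    ∀ i : Fin N,
      ∫ x : Euc N, u x * fderiv ℝ φ x (EuclideanSpace.single i 1) =
        -∫ x : Euc N, g x i * φ x

set_option maxHeartbeats 1600000 in
/-- Appendix, case `p − a0 < γ0 < N`: the existence of a suitable
shift `ξ ≥ 0` is equivalent to
`max{1, pβ0} < q1 < min{q_*(α0,β0,γ0), q_{**}(a0,α0,β0,γ0)}`. -/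
theorem statement14 (N : ℕ) (hN : 3 ≤ N) (p a0 β0 α0 γ0 q1 : ℝ)
    (hp : 1 < p) (hpN : p < N) (ha : p - (N : ℝ) < a0) (ha' : a0 ≤ p)
    (hβ : 0 ≤ β0) (hβ' : β0 ≤ 1) (hγ : p - a0 < γ0) (hγ' : γ0 < N) :
    (∃ ξ : ℝ, 0 ≤ ξ ∧ 1 / p ≤ β0 + ξ ∧ β0 + ξ ≤ 1 ∧ p * (β0 + ξ) < q1 ∧
        q1 < (p ^ 2 * (α0 + ξ * γ0) + p ^ 2 * N -
            p * (β0 + ξ) * ((p - 1) * γ0 + p - a0)) /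
          (p * ((N : ℝ) - 1) - (p - 1) * γ0 + a0)) ↔
      (max 1 (p * β0) < q1 ∧
        q1 < min (qStar N p α0 β0 γ0) (qStarStar N p a0 α0 β0 γ0)) := by
  have hNR : (3:ℝ) ≤ (N:ℝ) := by exact_mod_cast hN
  have hp0 : (0:ℝ) < p := by linarith
  have hE : (0:ℝ) < γ0 + a0 - p := by linarith
  have hNγ : (0:ℝ) < (N:ℝ) - γ0 := by linarith
  have hD : (0:ℝ) < p * ((N : ℝ) - 1) - (p - 1) * γ0 + a0 := by
    linarith [mul_pos hp0 hNγ]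
  have hD2 : (0:ℝ) < p * ((N : ℝ) - 1) - γ0 * (p - 1) + a0 := by
    linarith [mul_pos hp0 hNγ]
  have hpE : (0:ℝ) < p * (γ0 + a0 - p) := mul_pos hp0 hE
  constructor
  · rintro ⟨ξ, hξ0, h1, h2, h3, h4⟩
    have h4' : q1 * (p * ((N : ℝ) - 1) - (p - 1) * γ0 + a0) <
        p ^ 2 * (α0 + ξ * γ0) + p ^ 2 * N - p * (β0 + ξ) * ((p - 1) * γ0 + p - a0) :=
      (lt_div_iff₀ hD).mp h4
    have h1' : 1 ≤ (β0 + ξ) * p := (div_le_iff₀ hp0).mp h1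
    constructor
    · apply max_lt
      · linarith
      · linarith [mul_nonneg hp0.le hξ0]
    · apply lt_min
      · rw [qStar, lt_div_iff₀ hNγ]
        have hsc : p ^ 2 * (q1 * ((N:ℝ) - γ0)) < p ^ 2 * (p * (α0 - γ0 * β0 + (N:ℝ))) := by
          linarith [mul_lt_mul_of_pos_left h4' hp0, mul_lt_mul_of_pos_left h3 hpE]
        exact lt_of_mul_lt_mul_left hsc (by positivity)
      · rw [qStarStar, lt_div_iff₀ hD2]
        linarith [h4', mul_nonneg hpE.le (by linarith : (0:ℝ) ≤ 1 - (β0 + ξ))]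
  · rintro ⟨hm, hq⟩
    have h1q : (1:ℝ) < q1 := lt_of_le_of_lt (le_max_left _ _) hm
    have hpb : p * β0 < q1 := lt_of_le_of_lt (le_max_right _ _) hm
    have hqs : q1 < qStar N p α0 β0 γ0 := lt_of_lt_of_le hq (min_le_left _ _)
    have hqss : q1 < qStarStar N p a0 α0 β0 γ0 := lt_of_lt_of_le hq (min_le_right _ _)
    rw [qStar] at hqs
    rw [qStarStar] at hqss
    have hqs' : q1 * ((N:ℝ) - γ0) < p * (α0 - γ0 * β0 + N) := (lt_div_iff₀ hNγ).mp hqs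
    have hqss' : q1 * (p * ((N : ℝ) - 1) - γ0 * (p - 1) + a0) <
        p * (p * α0 + (1 - p * β0) * γ0 + p * ((N:ℝ) - 1) + a0) := (lt_div_iff₀ hD2).mp hqss
    set G : ℝ := p * (p * α0 + (1 - p * β0) * γ0 + p * ((N:ℝ) - 1) + a0) with hGdef
    set D2 : ℝ := p * ((N : ℝ) - 1) - γ0 * (p - 1) + a0 with hD2def
    set L3 : ℝ := 1 - (G - q1 * D2) / (p * (γ0 + a0 - p)) with hL3def
    set M : ℝ := max (max (1/p) β0) L3 with hMdef
    set b : ℝ := min 1 ((M + q1 / p) / 2) with hbdef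
    have hGq : 0 < G - q1 * D2 := by linarith
    have hL3lt1 : L3 < 1 := by
      have := div_pos hGq hpE
      rw [hL3def]; linarith
    have hL3ltq : L3 < q1 / p := by
      have h' : (1 - q1 / p) * (p * (γ0 + a0 - p)) < G - q1 * D2 := by
        have heq : (1 - q1 / p) * (p * (γ0 + a0 - p)) =
            p * (γ0 + a0 - p) - q1 * (γ0 + a0 - p) := by
          field_simp
        rw [heq, hGdef, hD2def]
        linarith [mul_lt_mul_of_pos_left hqs' hp0]
      have := (lt_div_iff₀ hpE).mpr h'
      rw [hL3def]; linarith
    have h1p : 1 / p < q1 / p := by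
      rw [div_lt_div_iff₀ hp0 hp0]; linarith [mul_lt_mul_of_pos_right h1q hp0]
    have hβq : β0 < q1 / p := (lt_div_iff₀ hp0).mpr (by linarith)
    have hMq : M < q1 / p := max_lt (max_lt h1p hβq) hL3ltq
    have hM1 : 1 / p ≤ M := le_trans (le_max_left _ _) (le_max_left _ _)
    have hMβ : β0 ≤ M := le_trans (le_max_right _ _) (le_max_left _ _)
    have hML3 : L3 ≤ M := le_max_right _ _
    have hmid1 : M < (M + q1 / p) / 2 := by linarith
    have hmid2 : (M + q1 / p) / 2 < q1 / p := by linarith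
    have hb1 : b ≤ 1 := min_le_left _ _
    have hp1le : 1 / p ≤ 1 := by rw [div_le_one hp0]; linarith
    have hbp : 1 / p ≤ b := le_min hp1le (le_of_lt (lt_of_le_of_lt hM1 hmid1))
    have hbβ : β0 ≤ b := le_min hβ' (le_of_lt (lt_of_le_of_lt hMβ hmid1))
    have hbL3 : L3 < b := lt_min hL3lt1 (lt_of_le_of_lt hML3 hmid1)
    have hbq : b < q1 / p := lt_of_le_of_lt (min_le_right _ _) hmid2
    have hbq' : b * p < q1 := (lt_div_iff₀ hp0).mp hbq
    refine ⟨b - β0, by linarith, by linarith, by linarith, by linarith, ?_⟩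
    rw [lt_div_iff₀ hD]
    have h0 : 1 - (G - q1 * D2) / (p * (γ0 + a0 - p)) < b := hL3def ▸ hbL3
    have h1 : 1 - b < (G - q1 * D2) / (p * (γ0 + a0 - p)) := by linarith
    have hkey : (1 - b) * (p * (γ0 + a0 - p)) < G - q1 * D2 := (lt_div_iff₀ hpE).mp h1
    rw [hGdef, hD2def] at hkey
    linarith [hkey]


end
end

section
/- Let N ≥ 3 be an integer, 1 < p < N, a0 ∈ (p−N, p], 0 ≤ β0 ≤ 1, α0 ∈ ℝ, and γ0 = N (so that γ0 > p − a0 since a0 > p − N). Let q1 ∈ ℝ. Then there exists ξ ≥ 0 such that 1/p ≤ β0 + ξ ≤ 1 and p(β0 + ξ) < q1 < [p²(α0 + ξN) + p²N − p(β0 + ξ)((p−1)N + p − a0)]/(p(N−1) − (p−1)N + a0) if and only if α0 > −(1−β0)N and max{1, pβ0} < q1 < q_**(a0, α0, β0, N). -/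
open MeasureTheory Filter Topology Metric Set
open scoped ENNReal NNReal

noncomputable section

/-- Appendix, case `γ0 = N`: the existence of a suitable shift
`ξ ≥ 0` is equivalent to `α0 > −(1−β0)N` and `max{1, pβ0} < q1 < q_{**}(a0,α0,β0,N)`. -/
theorem statement15 (N : ℕ) (hN : 3 ≤ N) (p a0 β0 α0 q1 : ℝ)
    (hp : 1 < p) (hpN : p < N) (ha : p - (N : ℝ) < a0) (ha' : a0 ≤ p)
    (hβ : 0 ≤ β0) (hβ' : β0 ≤ 1) :
    (∃ ξ : ℝ, 0 ≤ ξ ∧ 1 / p ≤ β0 + ξ ∧ β0 + ξ ≤ 1 ∧ p * (β0 + ξ) < q1 ∧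
        q1 < (p ^ 2 * (α0 + ξ * N) + p ^ 2 * N -
            p * (β0 + ξ) * ((p - 1) * N + p - a0)) /
          (p * ((N : ℝ) - 1) - (p - 1) * N + a0)) ↔
      (-(1 - β0) * N < α0 ∧ max 1 (p * β0) < q1 ∧
        q1 < qStarStar N p a0 α0 β0 N) := by
  have hp0 : (0:ℝ) < p := by linarith
  have hD : (0:ℝ) < p * ((N : ℝ) - 1) - (p - 1) * N + a0 := by
    have h : p * ((N : ℝ) - 1) - (p - 1) * N + a0 = (N:ℝ) - p + a0 := by ring
    rw [h]; linarith
  obtain ⟨M, hMdef⟩ : ∃ M : ℝ,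
      M = p ^ 2 * (α0 + (1 - β0) * N) / (p * ((N : ℝ) - 1) - (p - 1) * N + a0) :=
    ⟨_, rfl⟩
  have hD2 : p * ((N : ℝ) - 1) - (N : ℝ) * (p - 1) + a0 ≠ 0 := by
    intro h; apply hD.ne'; linarith [h]; 
  have hqss : qStarStar N p a0 α0 β0 N = p + M := by
    rw [qStarStar, hMdef]
    field_simp
    ring
  have key : ∀ ξ : ℝ,
      (p ^ 2 * (α0 + ξ * N) + p ^ 2 * N - p * (β0 + ξ) * ((p - 1) * N + p - a0)) /
        (p * ((N : ℝ) - 1) - (p - 1) * N + a0) = p * (β0 + ξ) + M := by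
    intro ξ
    rw [hMdef]
    field_simp
    ring
  constructor
  · rintro ⟨ξ, hξ0, hξ1, hξ2, hξ3, hξ4⟩
    rw [key ξ] at hξ4
    have hM : 0 < M := by linarith
    have hnum : 0 < α0 + (1 - β0) * (N : ℝ) := by
      by_contra h
      push_neg at h
      have hle : M ≤ 0 := by
        rw [hMdef]
        exact div_nonpos_of_nonpos_of_nonneg
          (mul_nonpos_iff.mpr (Or.inl ⟨(pow_pos hp0 2).le, h⟩)) hD.le
      linarith
    have h1 : 1 ≤ p * (β0 + ξ) := by
      have h2 := (div_le_iff₀ hp0).mp hξ1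
      have h3 : (β0 + ξ) * p = p * (β0 + ξ) := mul_comm _ _
      linarith
    have h4 : p * β0 < q1 := by
      have h5 : p * β0 ≤ p * (β0 + ξ) :=
        mul_le_mul_of_nonneg_left (by linarith) hp0.le
      linarith
    refine ⟨by linarith, max_lt (lt_of_le_of_lt h1 hξ3) h4, ?_⟩
    rw [hqss]
    have h6 : p * (β0 + ξ) ≤ p * 1 := mul_le_mul_of_nonneg_left hξ2 hp0.le
    have h7 : p * 1 = p := mul_one p
    linarith
  · rintro ⟨hα, hq, hqs⟩
    rw [hqss] at hqs
    have hM : 0 < M := by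
      rw [hMdef]
      exact div_pos (mul_pos (pow_pos hp0 2) (by linarith)) hD
    have h1q : 1 < q1 := (max_lt_iff.mp hq).1
    have hβq : p * β0 < q1 := (max_lt_iff.mp hq).2
    obtain ⟨b, hb⟩ : ∃ b : ℝ, b = min 1 (max (max β0 (1/p)) ((q1 - M/2)/p)) :=
      ⟨_, rfl⟩
    have hβb : β0 ≤ b := by
      rw [hb]; exact le_min hβ' (le_trans (le_max_left _ _) (le_max_left _ _))
    have hpb : 1/p ≤ b := by
      rw [hb]
      exact le_min (by rw [div_le_one hp0]; linarith)
        (le_trans (le_max_right _ _) (le_max_left _ _))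
    have hb1 : b ≤ 1 := by rw [hb]; exact min_le_left _ _
    have hpbq : p * b < q1 := by
      have h2 : b ≤ max (max β0 (1/p)) ((q1 - M/2)/p) := by
        rw [hb]; exact min_le_right _ _
      rcases le_total (max β0 (1/p)) ((q1 - M/2)/p) with h | h
      · have h3 : b ≤ (q1 - M/2)/p := h2.trans_eq (max_eq_right h)
        have h4 : b * p ≤ q1 - M/2 := (le_div_iff₀ hp0).mp h3
        have h5 : b * p = p * b := mul_comm _ _
        linarith
      · have h3 : b ≤ max β0 (1/p) := h2.trans_eq (max_eq_left h)
        rcases le_total β0 (1/p) with h' | h'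
        · have h4 : b * p ≤ 1 := by
            have := (le_div_iff₀ hp0).mp (h3.trans_eq (max_eq_right h'))
            linarith
          have h5 : b * p = p * b := mul_comm _ _
          linarith
        · have h4 : p * b ≤ p * β0 :=
            mul_le_mul_of_nonneg_left (h3.trans_eq (max_eq_left h')) hp0.le
          linarith
    have hq1 : q1 < p * b + M := by
      have h3 : min 1 ((q1 - M/2)/p) ≤ b := by
        rw [hb]; exact min_le_min le_rfl (le_max_right _ _)
      rcases le_total (1:ℝ) ((q1 - M/2)/p) with h | h
      · rw [min_eq_left h] at h3
        have h4 : p * 1 ≤ p * b := mul_le_mul_of_nonneg_left h3 hp0.le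
        have h5 : p * 1 = p := mul_one p
        linarith
      · rw [min_eq_right h] at h3
        have h5 : q1 - M/2 ≤ b * p := (div_le_iff₀ hp0).mp h3
        have h6 : b * p = p * b := mul_comm _ _
        linarith
    refine ⟨b - β0, by linarith, ?_, ?_, ?_, ?_⟩
    · have h : β0 + (b - β0) = b := by ring
      rw [h]; exact hpb
    · have h : β0 + (b - β0) = b := by ring
      rw [h]; exact hb1
    · have h : β0 + (b - β0) = b := by ring
      rw [h]; exact hpbq
    · rw [key (b - β0)]
      have h : β0 + (b - β0) = b := by ring
      rw [h]; exact hq1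

end
end

section
/- Let N ≥ 3 be an integer, 1 < p < N, a0 ∈ (p−N, p], 0 ≤ β0 ≤ 1, α0 ∈ ℝ, and let γ0 satisfy N < γ0 < (p(N−1) + a0)/(p−1). Let q1 ∈ ℝ. Then there exists ξ ≥ 0 such that 1/p ≤ β0 + ξ ≤ 1 and p(β0 + ξ) < q1 < [p²(α0 + ξγ0) + p²N − p(β0 + ξ)((p−1)γ0 + p − a0)]/(p(N−1) − (p−1)γ0 + a0) if and only if max{1, pβ0, q_*(α0, β0, γ0)} < q1 < q_**(a0, α0, β0, γ0). -/
open MeasureTheory Filter Topology Metric Set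
open scoped ENNReal NNReal

noncomputable section

/-- Appendix, case `N < γ0 < (p(N−1)+a0)/(p−1)`: the existence of a
suitable shift `ξ ≥ 0` is equivalent to
`max{1, pβ0, q_*(α0,β0,γ0)} < q1 < q_{**}(a0,α0,β0,γ0)`. -/
theorem statement16 (N : ℕ) (hN : 3 ≤ N) (p a0 β0 α0 γ0 q1 : ℝ)
    (hp : 1 < p) (hpN : p < N) (ha : p - (N : ℝ) < a0) (ha' : a0 ≤ p)
    (hβ : 0 ≤ β0) (hβ' : β0 ≤ 1)
    (hγ : (N : ℝ) < γ0) (hγ' : γ0 < (p * ((N : ℝ) - 1) + a0) / (p - 1)) :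
    (∃ ξ : ℝ, 0 ≤ ξ ∧ 1 / p ≤ β0 + ξ ∧ β0 + ξ ≤ 1 ∧ p * (β0 + ξ) < q1 ∧
        q1 < (p ^ 2 * (α0 + ξ * γ0) + p ^ 2 * N -
            p * (β0 + ξ) * ((p - 1) * γ0 + p - a0)) /
          (p * ((N : ℝ) - 1) - (p - 1) * γ0 + a0)) ↔
      (max (max 1 (p * β0)) (qStar N p α0 β0 γ0) < q1 ∧
        q1 < qStarStar N p a0 α0 β0 γ0) := by
  have hN3 : (3:ℝ) ≤ (N:ℝ) := by exact_mod_cast hN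
  have hp0 : (0:ℝ) < p := by linarith
  have hp1 : (0:ℝ) < p - 1 := by linarith
  have hD' : γ0 * (p - 1) < p * ((N:ℝ) - 1) + a0 := (lt_div_iff₀ hp1).mp hγ'
  have hDpos : 0 < p * ((N:ℝ) - 1) - (p - 1) * γ0 + a0 := by linarith
  have hDpos' : 0 < p * ((N:ℝ) - 1) - γ0 * (p - 1) + a0 := by linarith
  have hNγ : (N:ℝ) - γ0 < 0 := by linarith
  have hco : 0 < γ0 - p + a0 := by linarith
  have hcp : 0 < p * (γ0 - p + a0) := by positivity
  have hpinv : p * (1 / p) = 1 := by field_simp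
  constructor
  · rintro ⟨ξ, hξ0, h1p, hle1, hlow, hup⟩
    have hupm : q1 * (p * ((N:ℝ) - 1) - (p - 1) * γ0 + a0) <
        p ^ 2 * (α0 + ξ * γ0) + p ^ 2 * N - p * (β0 + ξ) * ((p - 1) * γ0 + p - a0) :=
      (lt_div_iff₀ hDpos).mp hup
    refine ⟨?_, ?_⟩
    · have h1q : 1 < q1 := by
        have h := mul_le_mul_of_nonneg_left h1p hp0.le
        rw [hpinv] at h; linarith
      have hpb : p * β0 < q1 := by
        have h := mul_le_mul_of_nonneg_left (by linarith : β0 ≤ β0 + ξ) hp0.le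
        linarith
      have hqs : qStar N p α0 β0 γ0 < q1 := by
        rw [qStar, div_lt_iff_of_neg hNγ]
        have key : p * (q1 * ((N:ℝ) - γ0)) < p * (p * (α0 - γ0 * β0 + (N:ℝ))) := by
          linarith [mul_lt_mul_of_pos_right hlow hco]
        exact (mul_lt_mul_iff_right₀ hp0).mp key
      exact max_lt (max_lt h1q hpb) hqs
    · rw [qStarStar, lt_div_iff₀ hDpos']
      linarith [mul_le_mul_of_nonneg_right hle1 hcp.le]
  · rintro ⟨hmax, hup⟩
    rw [max_lt_iff, max_lt_iff] at hmax
    obtain ⟨⟨h1q, hpβ⟩, hqs⟩ := hmax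
    have hqs' : q1 * ((N:ℝ) - γ0) < p * (α0 - γ0 * β0 + (N:ℝ)) := by
      rw [qStar, div_lt_iff_of_neg hNγ] at hqs; exact hqs
    have hup' : q1 * (p * ((N:ℝ) - 1) - γ0 * (p - 1) + a0) <
        p * (p * α0 + (1 - p * β0) * γ0 + p * ((N:ℝ) - 1) + a0) := by
      rw [qStarStar, lt_div_iff₀ hDpos'] at hup; exact hup
    by_cases hqp : p < q1
    · refine ⟨1 - β0, by linarith, ?_, by linarith, ?_, ?_⟩
      · have : 1 / p ≤ 1 := by rw [div_le_one hp0]; linarith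
        linarith
      · rw [show β0 + (1 - β0) = (1:ℝ) from by ring, mul_one]; exact hqp
      · rw [lt_div_iff₀ hDpos]
        linarith [hup']
    · push_neg at hqp
      set bl : ℝ := (q1 * (p * ((N:ℝ) - 1) - (p - 1) * γ0 + a0) -
          (p ^ 2 * α0 - p ^ 2 * β0 * γ0 + p ^ 2 * (N:ℝ))) / (p * (γ0 - p + a0)) with hbl
      have hq1C : p * (q1 * ((N:ℝ) - γ0)) < p * (p * (α0 - γ0 * β0 + (N:ℝ))) :=
        mul_lt_mul_of_pos_left hqs' hp0
      have hblq : bl < q1 / p := by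
        rw [hbl, div_lt_div_iff₀ hcp hp0]
        linarith [mul_lt_mul_of_pos_left hq1C hp0]
      set b : ℝ := max (max β0 (1 / p)) ((bl + q1 / p) / 2) with hb
      have hbub : b < q1 / p := by
        apply max_lt (max_lt ?_ ?_) ?_
        · rw [lt_div_iff₀ hp0]; linarith [hpβ]
        · rw [div_lt_div_iff₀ hp0 hp0]; exact mul_lt_mul_of_pos_right h1q hp0
        · linarith
      have hbβ : β0 ≤ b := le_trans (le_max_left _ _) (le_max_left _ _)
      have hbp : 1 / p ≤ b := le_trans (le_max_right _ _) (le_max_left _ _)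
      have hbgt : bl < b :=
        lt_of_lt_of_le (by linarith : bl < (bl + q1 / p) / 2) (le_max_right _ _)
      have hq1p1 : q1 / p ≤ 1 := by rw [div_le_one hp0]; exact hqp
      have hbpq : b * p < q1 := (lt_div_iff₀ hp0).mp hbub
      refine ⟨b - β0, by linarith, by linarith, by linarith, by linarith [hbpq], ?_⟩
      rw [lt_div_iff₀ hDpos]
      have hblm : bl * (p * (γ0 - p + a0)) =
          q1 * (p * ((N:ℝ) - 1) - (p - 1) * γ0 + a0) -
            (p ^ 2 * α0 - p ^ 2 * β0 * γ0 + p ^ 2 * (N:ℝ)) :=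
        div_mul_cancel₀ _ hcp.ne'
      linarith [hblm, mul_lt_mul_of_pos_right hbgt hcp]

end
end

section
/- Let N ≥ 3 be an integer, 1 < p < N, a0 ∈ (p−N, p], 0 ≤ β0 ≤ 1, α0 ∈ ℝ, and γ0 = (p(N−1) + a0)/(p−1). Let q1 ∈ ℝ. Then there exists ξ ≥ 0 such that 1/p ≤ β0 + ξ ≤ 1, q1 > p(β0 + ξ), and p(α0 + ξγ0) + pN − ((p−1)γ0 + p − a0)(β0 + ξ) > 0, if and only if α0 > −(1−β0)γ0 and q1 > max{1, pβ0, q_*(α0, β0, γ0)}. -/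
open MeasureTheory Filter Topology Metric Set
open scoped ENNReal NNReal

noncomputable section

set_option maxHeartbeats 1600000 in
/-- Appendix, case `γ0 = (p(N−1)+a0)/(p−1)`: the existence of a
suitable shift `ξ ≥ 0` is equivalent to `α0 > −(1−β0)γ0` and
`q1 > max{1, pβ0, q_*(α0,β0,γ0)}`. -/
theorem statement17 (N : ℕ) (hN : 3 ≤ N) (p a0 β0 α0 γ0 q1 : ℝ)
    (hp : 1 < p) (hpN : p < N) (ha : p - (N : ℝ) < a0) (ha' : a0 ≤ p)
    (hβ : 0 ≤ β0) (hβ' : β0 ≤ 1)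
    (hγ : γ0 = (p * ((N : ℝ) - 1) + a0) / (p - 1)) :
    (∃ ξ : ℝ, 0 ≤ ξ ∧ 1 / p ≤ β0 + ξ ∧ β0 + ξ ≤ 1 ∧ p * (β0 + ξ) < q1 ∧
        0 < p * (α0 + ξ * γ0) + p * N - ((p - 1) * γ0 + p - a0) * (β0 + ξ)) ↔
      (-(1 - β0) * γ0 < α0 ∧
        max (max 1 (p * β0)) (qStar N p α0 β0 γ0) < q1) := by
  have hp0 : (0:ℝ) < p := by linarith
  have hp1 : (0:ℝ) < p - 1 := by linarith
  rw [eq_div_iff (ne_of_gt hp1)] at hγ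
  -- hγ : γ0 * (p - 1) = p * (N - 1) + a0
  have hγN : (N:ℝ) < γ0 := by nlinarith [hγ, ha, hp1]
  have hγ0N : (0:ℝ) < γ0 - N := by linarith
  have hcoef : (p - 1) * γ0 + p - a0 = p * N := by nlinarith [hγ]
  constructor
  · rintro ⟨ξ, hξ0, h1, h2, h3, h4⟩
    rw [hcoef] at h4
    have hα : -(1 - β0) * γ0 < α0 := by
      have h5 : 0 ≤ p * ((1 - β0 - ξ) * (γ0 - N)) :=
        mul_nonneg hp0.le (mul_nonneg (by linarith) (by linarith))
      nlinarith [h4, h5, hp0]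
    refine ⟨hα, ?_⟩
    have hone : (1:ℝ) ≤ p * (β0 + ξ) := by
      have e : p * (1 / p) = 1 := by field_simp
      nlinarith [mul_le_mul_of_nonneg_left h1 hp0.le]
    refine max_lt (max_lt (by linarith) ?_) ?_
    · nlinarith [mul_nonneg hp0.le hξ0]
    · rw [qStar, div_lt_iff_of_neg (by linarith : (N:ℝ) - γ0 < 0)]
      nlinarith [h4, mul_pos (sub_pos.mpr h3) (sub_pos.mpr hγN)]
  · rintro ⟨hα, hq⟩
    rw [max_lt_iff, max_lt_iff] at hq
    obtain ⟨⟨hq1, hqβ⟩, hqs⟩ := hq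
    have hqs' : q1 * ((N:ℝ) - γ0) < p * (α0 - γ0 * β0 + N) := by
      rw [qStar] at hqs
      exact (div_lt_iff_of_neg (by linarith : (N:ℝ) - γ0 < 0)).mp hqs
    set T2 : ℝ := ((N:ℝ) * (β0 - 1) - α0) / (γ0 - N) with hT2def
    have hT2e : T2 * (γ0 - N) = (N:ℝ) * (β0 - 1) - α0 :=
      div_mul_cancel₀ _ (ne_of_gt hγ0N)
    have hT2U : T2 < 1 - β0 := by
      rw [hT2def, div_lt_iff₀ hγ0N]
      nlinarith [hα]
    have hT2T1 : T2 < q1 / p - β0 := by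
      have h5 : (T2 + β0) * p < q1 := by
        have hT2e' : p * (T2 * (γ0 - N)) = p * ((N:ℝ) * (β0 - 1) - α0) := by
          rw [hT2e]
        nlinarith [hqs', hT2e', hγ0N, hp0]
      have h6 : T2 + β0 < q1 / p := (lt_div_iff₀ hp0).mpr h5
      linarith
    set m : ℝ := min (1 - β0) (q1 / p - β0) with hmdef
    have hT2m : T2 < m := lt_min hT2U hT2T1
    have hm1 : m ≤ 1 - β0 := min_le_left _ _
    have hm2 : m ≤ q1 / p - β0 := min_le_right _ _
    set ξ : ℝ := max (max 0 (1 / p - β0)) ((T2 + m) / 2) with hξdef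
    have hξ0 : 0 ≤ ξ := le_trans (le_max_left 0 _) (le_max_left _ _)
    have hξ1 : 1 / p - β0 ≤ ξ := le_trans (le_max_right 0 _) (le_max_left _ _)
    have hmid : (T2 + m) / 2 < m := by linarith
    have hpinv : 1 / p ≤ 1 := by rw [div_le_one hp0]; linarith
    have hξU : ξ ≤ 1 - β0 := by
      apply max_le (max_le (by linarith) (by linarith)) (by linarith)
    have c1 : (0:ℝ) < q1 / p - β0 := by
      have : β0 < q1 / p := (lt_div_iff₀ hp0).mpr (by linarith)
      linarith
    have c2 : 1 / p - β0 < q1 / p - β0 := by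
      have : 1 / p < q1 / p := by
        rw [div_lt_div_iff₀ hp0 hp0]
        nlinarith [mul_pos (sub_pos.mpr hq1) hp0]
      linarith
    have hd : ξ < q1 / p - β0 :=
      max_lt (max_lt c1 c2) (by linarith)
    have hdq : p * (β0 + ξ) < q1 := by
      have h7 := mul_lt_mul_of_pos_left hd hp0
      have e : p * (q1 / p) = 1 * q1 := by field_simp
      nlinarith [h7, e]
    have hξT2 : T2 < ξ :=
      lt_of_lt_of_le (by linarith : T2 < (T2 + m) / 2) (le_max_right _ _)
    have hkey : (N:ℝ) * (β0 - 1) - α0 < ξ * (γ0 - N) := by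
      have := mul_lt_mul_of_pos_right hξT2 hγ0N
      linarith [hT2e]
    refine ⟨ξ, hξ0, by linarith, by linarith, hdq, ?_⟩
    rw [hcoef]
    nlinarith [hkey, hp0]


end
end

section
/- Let N ≥ 3 be an integer, 1 < p < N, a0 ∈ (p−N, p], 0 ≤ β0 ≤ 1, α0 ∈ ℝ, and let γ0 satisfy γ0 > (p(N−1) + a0)/(p−1). Let q1 ∈ ℝ. Then there exists ξ ≥ 0 such that 1/p ≤ β0 + ξ ≤ 1 and q1 > p · max{ β0 + ξ , [p(α0 + ξγ0) + pN − ((p−1)γ0 + p − a0)(β0 + ξ)]/(p(N−1) − (p−1)γ0 + a0) } if and only if q1 > max{1, pβ0, q_*(α0, β0, γ0), q_**(a0, α0, β0, γ0)}. -/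
open MeasureTheory Filter Topology Metric Set
open scoped ENNReal NNReal

noncomputable section

/-- Appendix, case `γ0 > (p(N−1)+a0)/(p−1)`: the existence of a
suitable shift `ξ ≥ 0` is equivalent to
`q1 > max{1, pβ0, q_*(α0,β0,γ0), q_{**}(a0,α0,β0,γ0)}`. -/
theorem statement18 (N : ℕ) (hN : 3 ≤ N) (p a0 β0 α0 γ0 q1 : ℝ)
    (hp : 1 < p) (hpN : p < N) (ha : p - (N : ℝ) < a0) (ha' : a0 ≤ p)
    (hβ : 0 ≤ β0) (hβ' : β0 ≤ 1)
    (hγ : (p * ((N : ℝ) - 1) + a0) / (p - 1) < γ0) :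
    (∃ ξ : ℝ, 0 ≤ ξ ∧ 1 / p ≤ β0 + ξ ∧ β0 + ξ ≤ 1 ∧
        p * max (β0 + ξ)
            ((p * (α0 + ξ * γ0) + p * N - ((p - 1) * γ0 + p - a0) * (β0 + ξ)) /
              (p * ((N : ℝ) - 1) - (p - 1) * γ0 + a0)) < q1) ↔
      max (max (max 1 (p * β0)) (qStar N p α0 β0 γ0)) (qStarStar N p a0 α0 β0 γ0)
        < q1 := by
  have hp0 : (0:ℝ) < p := by linarith
  have hp1 : (0:ℝ) < p - 1 := by linarith
  have hγ' : p * ((N:ℝ) - 1) + a0 < γ0 * (p - 1) := by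
    have := (div_lt_iff₀ hp1).mp hγ; linarith
  have hD : p * ((N:ℝ) - 1) - (p - 1) * γ0 + a0 < 0 := by nlinarith
  have hDne : p * ((N:ℝ) - 1) - (p - 1) * γ0 + a0 ≠ 0 := hD.ne
  have hNγ : (N:ℝ) - γ0 < 0 := by nlinarith
  have hNγne : (N:ℝ) - γ0 ≠ 0 := hNγ.ne
  have hE : (0:ℝ) < γ0 - p + a0 := by
    nlinarith [mul_lt_mul_of_pos_left ha hp0]
  set G : ℝ → ℝ := fun β =>
    p * ((p * (α0 - γ0 * β0 + (N:ℝ)) + β * (γ0 - p + a0)) /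
      (p * ((N:ℝ) - 1) - (p - 1) * γ0 + a0)) with hGdef
  set βs : ℝ := (α0 - γ0 * β0 + (N:ℝ)) / ((N:ℝ) - γ0) with hβsdef
  have hGmono : ∀ x y : ℝ, x ≤ y → G y ≤ G x := by
    intro x y hxy
    simp only [hGdef, div_eq_mul_inv]
    have hinv : (p * ((N:ℝ) - 1) - (p - 1) * γ0 + a0)⁻¹ < 0 := inv_lt_zero.mpr hD
    nlinarith [mul_nonneg (mul_nonneg (mul_nonneg hp0.le (sub_nonneg.mpr hxy)) hE.le)
      (neg_nonneg.mpr hinv.le)]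
  have hpβs : p * βs = qStar N p α0 β0 γ0 := by
    rw [hβsdef, qStar, mul_div_assoc]
  have hGβs : G βs = qStar N p α0 β0 γ0 := by
    simp only [hGdef, hβsdef, qStar]
    rw [div_mul_eq_mul_div, add_div' _ _ _ hNγne, div_div, ← mul_div_assoc, div_eq_div_iff (mul_ne_zero hNγne hDne) hNγne]
    ring
  have hG1 : G 1 = qStarStar N p a0 α0 β0 γ0 := by
    simp only [hGdef, qStarStar, mul_div_assoc]
    have h : p * (α0 - γ0 * β0 + (N:ℝ)) + 1 * (γ0 - p + a0)
        = p * α0 + (1 - p * β0) * γ0 + p * ((N:ℝ) - 1) + a0 := by ring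
    have h2 : p * ((N:ℝ) - 1) - (p - 1) * γ0 + a0
        = p * ((N:ℝ) - 1) - γ0 * (p - 1) + a0 := by ring
    rw [h, h2]
  have hexpr : ∀ ξ : ℝ,
      p * ((p * (α0 + ξ * γ0) + p * (N:ℝ) - ((p - 1) * γ0 + p - a0) * (β0 + ξ)) /
        (p * ((N:ℝ) - 1) - (p - 1) * γ0 + a0)) = G (β0 + ξ) := by
    intro ξ
    simp only [hGdef]
    have : p * (α0 + ξ * γ0) + p * (N:ℝ) - ((p - 1) * γ0 + p - a0) * (β0 + ξ)
        = p * (α0 - γ0 * β0 + (N:ℝ)) + (β0 + ξ) * (γ0 - p + a0) := by ring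
    rw [this]
  constructor
  · rintro ⟨ξ, hξ, h1p, hle1, hlt⟩
    rw [mul_max_of_nonneg _ _ hp0.le] at hlt
    have hA : p * (β0 + ξ) < q1 := lt_of_le_of_lt (le_max_left _ _) hlt
    have hB : G (β0 + ξ) < q1 := by
      rw [← hexpr ξ]; exact lt_of_le_of_lt (le_max_right _ _) hlt
    have h1q : (1:ℝ) < q1 := by
      have h2 : p * (1 / p) ≤ p * (β0 + ξ) := mul_le_mul_of_nonneg_left h1p hp0.le
      rw [mul_one_div_cancel hp0.ne'] at h2
      linarith
    apply max_lt (max_lt (max_lt h1q ?_) ?_) ?_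
    · nlinarith [mul_nonneg hp0.le hξ]
    · rcases le_total βs (β0 + ξ) with h | h
      · rw [← hpβs]
        have := mul_le_mul_of_nonneg_left h hp0.le
        linarith
      · rw [← hGβs]
        exact lt_of_le_of_lt (hGmono _ _ h) hB
    · rw [← hG1]
      exact lt_of_le_of_lt (hGmono _ _ hle1) hB
  · intro hq
    have h1q : (1:ℝ) < q1 := by
      have := le_max_left (max (max 1 (p * β0)) (qStar N p α0 β0 γ0))
        (qStarStar N p a0 α0 β0 γ0)
      have h2 := le_max_left (max 1 (p * β0)) (qStar N p α0 β0 γ0)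
      have h3 := le_max_left (1:ℝ) (p * β0)
      linarith
    have hb0q : p * β0 < q1 := by
      have := le_max_left (max (max 1 (p * β0)) (qStar N p α0 β0 γ0))
        (qStarStar N p a0 α0 β0 γ0)
      have h2 := le_max_left (max 1 (p * β0)) (qStar N p α0 β0 γ0)
      have h3 := le_max_right (1:ℝ) (p * β0)
      linarith
    have hqsq : qStar N p α0 β0 γ0 < q1 := by
      have := le_max_left (max (max 1 (p * β0)) (qStar N p α0 β0 γ0))
        (qStarStar N p a0 α0 β0 γ0)
      have h2 := le_max_right (max 1 (p * β0)) (qStar N p α0 β0 γ0)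
      linarith
    have hssq : qStarStar N p a0 α0 β0 γ0 < q1 :=
      lt_of_le_of_lt (le_max_right _ _) hq
    set βL : ℝ := max β0 (1 / p) with hβLdef
    set β : ℝ := min 1 (max βL βs) with hβdef
    have hinvp1 : (1:ℝ) / p ≤ 1 := by
      rw [div_le_one hp0]; linarith
    have hβLle1 : βL ≤ 1 := max_le hβ' hinvp1
    have hβ0β : β0 ≤ β := by
      apply le_min hβ'
      exact le_trans (le_max_left _ _ : β0 ≤ βL) (le_max_left _ _)
    have hinvpβ : 1 / p ≤ β := by
      apply le_min hinvp1
      exact le_trans (le_max_right _ _ : 1 / p ≤ βL) (le_max_left _ _)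
    have hβ1 : β ≤ 1 := min_le_left _ _
    refine ⟨β - β0, by linarith, ?_, ?_, ?_⟩
    · rw [show β0 + (β - β0) = β by ring]; exact hinvpβ
    · rw [show β0 + (β - β0) = β by ring]; exact hβ1
    · rw [mul_max_of_nonneg _ _ hp0.le, hexpr (β - β0),
        show β0 + (β - β0) = β by ring]
      have hpβL : p * βL < q1 := by
        rw [hβLdef, mul_max_of_nonneg _ _ hp0.le, mul_one_div_cancel hp0.ne']
        exact max_lt hb0q h1q
      have h4a : p * β < q1 := by
        have h1 : p * β ≤ p * max βL βs :=
          mul_le_mul_of_nonneg_left (min_le_right _ _) hp0.le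
        rw [mul_max_of_nonneg _ _ hp0.le] at h1
        refine lt_of_le_of_lt h1 (max_lt hpβL ?_)
        rw [hpβs]; exact hqsq
      have h4b : G β < q1 := by
        have h1 : min 1 βs ≤ β := min_le_min (le_refl 1) (le_max_right _ _)
        refine lt_of_le_of_lt (hGmono _ _ h1) ?_
        rcases le_total 1 βs with h | h
        · rw [min_eq_left h, hG1]; exact hssq
        · rw [min_eq_right h, hGβs]; exact hqsq
      exact max_lt h4a h4b

end
end
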